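/- arXiv:2001.10234 — 7 statements merged into one kernel-verified Lean document; each statement's English description precedes it below -/
import Mathlib

section
/- (Theorem 1) Consider problem P1 with K users, and suppose h_k · P_th > P_0 for every k. Let (P_s, τ_0, (τ_k), (P_k), (f_k)) be any feasible point of P1, i.e.: 0 ≤ P_s ≤ P_th; 0 ≤ τ_0 ≤ T; 0 ≤ τ_k ≤ T, P_k ≥ 0, f_k ≥ 0 for all k; τ_0 + Σ_{k=1}^K τ_k ≤ T; R_k := T·f_k/C + (B·τ_k/v_k)·log₂(1 + g_k·P_k/σ²) ≥ R_{k,min} for all k; and E_k := τ_0·P_{r,k} + ζ·τ_k·(P_k + P_{c,k}) + T·γ_c·f_k³ ≤ τ_0·P_{E,k}(P_s) for all k. Then there exists τ_0′ with 0 ≤ τ_0′ ≤ τ_0 such that (P_th, τ_0′, (τ_k), (P_k), (f_k)) is also feasible for P1 and, for every k, the energy E_k′ := τ_0′·P_{r,k} + ζ·τ_k·(P_k + P_{c,k}) + T·γ_c·f_k³ satisfies E_k′ ≤ E_k while the computed bits R_k are unchanged. Consequently the maximum of the max-min computation efficiency min_k R_k/E_k over the feasible set of P1 is achieved with P_s =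 P_th. -/
/-!
The harvested power of the non-linear (logistic) EH model is non-decreasing in the station
power, so raising `P_s` to `P_th` only relaxes the energy constraints of P1 and leaves every
other constraint, the computed bits and the energies untouched. Hence every feasible point
stays feasible with `P_s = P_th` (keeping `τ₀' = τ₀`), and the max-min efficiencies attainable
over all of P1 are exactly those attainable with `P_s = P_th`.
-/

open Real

lemma monotone_div_one_add_exp {a m : ℝ} (ha : 0 ≤ a) (hm : m ≤ 0) (c : ℝ) :
    Monotone fun x => a / (1 + exp (m * x + c)) := by
  intro x y hxy
  have hexp : exp (m * y + c) ≤ exp (m * x + c) :=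
    exp_le_exp.2 (add_le_add_left (mul_le_mul_of_nonpos_left hxy hm) c)
  dsimp only
  gcongr

lemma monotone_max_zero_mul_div_one_add_exp_sub_one {A B m : ℝ} (hA : 0 ≤ A) (hB : 0 ≤ B)
    (hm : m ≤ 0) (c : ℝ) :
    Monotone fun x => max 0 (A * (B / (1 + exp (m * x + c)) - 1)) := fun _ _ hxy =>
  max_le_max le_rfl <| mul_le_mul_of_nonneg_left
    (sub_le_sub_right (monotone_div_one_add_exp hB hm c hxy) 1) hA

open Finset in
theorem thm1_station_power_at_max_general
    (K : ℕ) (T : ℝ)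
    (h Rmin Pmax : Fin K → ℝ)
    (hh : ∀ k, 0 < h k)
    (hPmax : ∀ k, 0 < Pmax k)
    (μ ψ P0 Pth : ℝ) (hμ : 0 < μ) (hPth : 0 < Pth)
    -- non-linear EH model: harvested power of user k at station power Ps
    (PE : Fin K → ℝ → ℝ)
    (hPE : ∀ k Ps, PE k Ps = max 0 ((Pmax k / Real.exp (-μ * P0 + ψ)) *
      ((1 + Real.exp (-μ * P0 + ψ)) / (1 + Real.exp (-μ * h k * Ps + ψ)) - 1)))
    -- computed bits, consumed energy, feasibility of P1
    (Rate : (Fin K → ℝ) → (Fin K → ℝ) → (Fin K → ℝ) → Fin K → ℝ)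
    (Energy : ℝ → (Fin K → ℝ) → (Fin K → ℝ) → (Fin K → ℝ) → Fin K → ℝ)
    (Feas : ℝ → ℝ → (Fin K → ℝ) → (Fin K → ℝ) → (Fin K → ℝ) → Prop)
    (hFeas : ∀ Ps τ0 τ P f, Feas Ps τ0 τ P f ↔
      (0 ≤ Ps ∧ Ps ≤ Pth) ∧ (0 ≤ τ0 ∧ τ0 ≤ T) ∧
      (∀ k, 0 ≤ τ k ∧ τ k ≤ T) ∧ (∀ k, 0 ≤ P k) ∧ (∀ k, 0 ≤ f k) ∧
      τ0 + ∑ k, τ k ≤ T ∧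
      (∀ k, Rmin k ≤ Rate τ P f k) ∧
      (∀ k, Energy τ0 τ P f k ≤ τ0 * PE k Ps)) :
    -- energy reduction while keeping feasibility and the computed bits
    (∀ Ps τ0 τ P f, Feas Ps τ0 τ P f →
      ∃ τ0' : ℝ, 0 ≤ τ0' ∧ τ0' ≤ τ0 ∧ Feas Pth τ0' τ P f ∧
        ∀ k, Energy τ0' τ P f k ≤ Energy τ0 τ P f k) ∧
    -- consequently, the max-min computation efficiency is achieved with Ps = Pth
    sSup {r : ℝ | ∃ Ps τ0 τ P f, Feas Ps τ0 τ P f ∧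
        r = ⨅ k : Fin K, Rate τ P f k / Energy τ0 τ P f k} =
    sSup {r : ℝ | ∃ τ0 τ P f, Feas Pth τ0 τ P f ∧
        r = ⨅ k : Fin K, Rate τ P f k / Energy τ0 τ P f k} := by
  have PE_mono (k : Fin K) : Monotone (PE k) := by
    rw [funext (hPE k)]
    exact monotone_max_zero_mul_div_one_add_exp_sub_one
      (div_nonneg (hPmax k).le (exp_pos _).le) (by positivity)
      (by nlinarith [mul_pos hμ (hh k)]) ψ
  have feas_at_Pth : ∀ Ps τ0 τ P f, Feas Ps τ0 τ P f → Feas Pth τ0 τ P f := by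
    intro Ps τ0 τ P f hfeas
    rw [hFeas] at hfeas ⊢
    obtain ⟨⟨-, hPs⟩, hτ0, hτ, hP, hf, hsum, hR, hE⟩ := hfeas
    exact ⟨⟨hPth.le, le_rfl⟩, hτ0, hτ, hP, hf, hsum, hR, fun k =>
      (hE k).trans (mul_le_mul_of_nonneg_left (PE_mono k hPs) hτ0.1)⟩
  refine ⟨fun Ps τ0 τ P f hfeas => ⟨τ0, ((hFeas _ _ _ _ _).1 hfeas).2.1.1, le_rfl,
    feas_at_Pth _ _ _ _ _ hfeas, fun _ => le_rfl⟩, ?_⟩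
  congr 1
  ext r
  constructor
  · rintro ⟨Ps, τ0, τ, P, f, hfeas, rfl⟩
    exact ⟨τ0, τ, P, f, feas_at_Pth _ _ _ _ _ hfeas, rfl⟩
  · rintro ⟨τ0, τ, P, f, hfeas, rfl⟩
    exact ⟨Pth, τ0, τ, P, f, hfeas, rfl⟩

open Finset in
/-- Theorem 1: in the TDMA wireless-powered MEC network under partial offloading,
any feasible point of P1 can be modified, by setting the station power to `P_th`
and suitably shrinking the energy-harvesting time, into another feasible point
with unchanged computed bits and no larger consumed energy for every user;
consequently the max-min computation efficiency over the feasible set of P1 is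
achieved with `P_s = P_th`. -/
theorem thm1_station_power_at_max
    (K : ℕ) (hK : 0 < K) (T C B σ2 ζ γc : ℝ)
    (hT : 0 < T) (hC : 0 < C) (hB : 0 < B) (hσ : 0 < σ2) (hζ : 0 < ζ) (hγ : 0 < γc)
    (h g v Pr Pc Rmin Pmax : Fin K → ℝ)
    (hh : ∀ k, 0 < h k) (hg : ∀ k, 0 < g k) (hv : ∀ k, 0 < v k)
    (hPr : ∀ k, 0 ≤ Pr k) (hPc : ∀ k, 0 ≤ Pc k) (hRmin : ∀ k, 0 < Rmin k)
    (hPmax : ∀ k, 0 < Pmax k)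
    (μ ψ P0 Pth : ℝ) (hμ : 0 < μ) (hP0 : 0 ≤ P0) (hPth : 0 < Pth)
    (hthr : ∀ k, P0 < h k * Pth)
    -- non-linear EH model: harvested power of user k at station power Ps
    (PE : Fin K → ℝ → ℝ)
    (hPE : ∀ k Ps, PE k Ps = max 0 ((Pmax k / Real.exp (-μ * P0 + ψ)) *
      ((1 + Real.exp (-μ * P0 + ψ)) / (1 + Real.exp (-μ * h k * Ps + ψ)) - 1)))
    -- computed bits, consumed energy, feasibility of P1
    (Rate : (Fin K → ℝ) → (Fin K → ℝ) → (Fin K → ℝ) → Fin K → ℝ)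
    (hRate : ∀ τ P f k, Rate τ P f k =
      T * f k / C + (B * τ k / v k) * Real.logb 2 (1 + g k * P k / σ2))
    (Energy : ℝ → (Fin K → ℝ) → (Fin K → ℝ) → (Fin K → ℝ) → Fin K → ℝ)
    (hEnergy : ∀ τ0 τ P f k, Energy τ0 τ P f k =
      τ0 * Pr k + ζ * τ k * (P k + Pc k) + T * γc * (f k) ^ 3)
    (Feas : ℝ → ℝ → (Fin K → ℝ) → (Fin K → ℝ) → (Fin K → ℝ) → Prop)
    (hFeas : ∀ Ps τ0 τ P f, Feas Ps τ0 τ P f ↔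
      (0 ≤ Ps ∧ Ps ≤ Pth) ∧ (0 ≤ τ0 ∧ τ0 ≤ T) ∧
      (∀ k, 0 ≤ τ k ∧ τ k ≤ T) ∧ (∀ k, 0 ≤ P k) ∧ (∀ k, 0 ≤ f k) ∧
      τ0 + ∑ k, τ k ≤ T ∧
      (∀ k, Rmin k ≤ Rate τ P f k) ∧
      (∀ k, Energy τ0 τ P f k ≤ τ0 * PE k Ps)) :
    -- energy reduction while keeping feasibility and the computed bits
    (∀ Ps τ0 τ P f, Feas Ps τ0 τ P f →
      ∃ τ0' : ℝ, 0 ≤ τ0' ∧ τ0' ≤ τ0 ∧ Feas Pth τ0' τ P f ∧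
        ∀ k, Energy τ0' τ P f k ≤ Energy τ0 τ P f k) ∧
    -- consequently, the max-min computation efficiency is achieved with Ps = Pth
    sSup {r : ℝ | ∃ Ps τ0 τ P f, Feas Ps τ0 τ P f ∧
        r = ⨅ k : Fin K, Rate τ P f k / Energy τ0 τ P f k} =
    sSup {r : ℝ | ∃ τ0 τ P f, Feas Pth τ0 τ P f ∧
        r = ⨅ k : Fin K, Rate τ P f k / Energy τ0 τ P f k} :=
  thm1_station_power_at_max_general K T h Rmin Pmax hh hPmax μ ψ P0 Pth hμ hPth PE hPE Rate Energy
    Feas hFeas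
end

section
/- (Lemma 1, generalized Dinkelbach equivalence for max-min fractional programming) Let S be a nonempty set, let K be a nonempty finite index set, and let R_k, E_k : S → ℝ for k ∈ K with E_k(x) > 0 for every k ∈ K and x ∈ S. Let x* ∈ S and set η* := min_{k∈K} R_k(x*)/E_k(x*). Then x* maximizes min_{k∈K} R_k(x)/E_k(x) over S (i.e., min_k R_k(x)/E_k(x) ≤ η* for all x ∈ S) if and only if min_{k∈K} (R_k(x) − η*·E_k(x)) ≤ 0 for all x ∈ S and min_{k∈K} (R_k(x*) − η*·E_k(x*)) = 0; that is, x* achieves the maximum value 0 of the parametric problem max_{x∈S} min_{k∈K} (R_k(x) − η*·E_k(x)). -/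
/-! Since every `E_k(x)` is positive, `R_k(x)/E_k(x) ≤ η` iff `R_k(x) − η·E_k(x) ≤ 0`, and likewise
with `≥`; as a minimum over finitely many indices is `≤ c` (resp. `≥ c`) iff some (resp. every) term
is, the fractional and parametric objectives lie on the same side of `η` and `0`. Applied at every
`x` this transfers optimality; applied at `x*` with `η* = min_k R_k(x*)/E_k(x*)` it gives
`min_k (R_k(x*) − η*·E_k(x*)) ≥ 0`, hence `= 0`. -/

section

variable {𝕜 ι : Type*} [Field 𝕜] [LinearOrder 𝕜] [IsStrictOrderedRing 𝕜]

theorem div_le_iff_sub_mul_nonpos {r e : 𝕜} (he : 0 < e) (η : 𝕜) :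
    r / e ≤ η ↔ r - η * e ≤ 0 := by
  rw [div_le_iff₀ he, sub_nonpos]

theorem le_div_iff_sub_mul_nonneg {r e : 𝕜} (he : 0 < e) (η : 𝕜) :
    η ≤ r / e ↔ 0 ≤ r - η * e := by
  rw [le_div_iff₀ he, sub_nonneg]

namespace Finset

variable {s : Finset ι} (hs : s.Nonempty) {r e : ι → 𝕜}

theorem inf'_div_le_iff_inf'_sub_mul_nonpos (he : ∀ i ∈ s, 0 < e i) (η : 𝕜) :
    s.inf' hs (fun i => r i / e i) ≤ η ↔ s.inf' hs (fun i => r i - η * e i) ≤ 0 := by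
  simp only [inf'_le_iff]
  exact exists_congr fun i => and_congr_right fun hi => div_le_iff_sub_mul_nonpos (he i hi) η

theorem le_inf'_div_iff_inf'_sub_mul_nonneg (he : ∀ i ∈ s, 0 < e i) (η : 𝕜) :
    η ≤ s.inf' hs (fun i => r i / e i) ↔ 0 ≤ s.inf' hs (fun i => r i - η * e i) := by
  simp only [le_inf'_iff]
  exact forall₂_congr fun i hi => le_div_iff_sub_mul_nonneg (he i hi) η

end Finset

end

theorem dinkelbach_maxmin_equivalence_general
    (S K : Type*) [Fintype K] [Nonempty K]
    (R E : K → S → ℝ) (hE : ∀ k x, 0 < E k x)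
    (xstar : S) (ηstar : ℝ)
    (hηstar : ηstar = Finset.univ.inf' Finset.univ_nonempty
      (fun k => R k xstar / E k xstar)) :
    (∀ x : S, Finset.univ.inf' Finset.univ_nonempty
        (fun k => R k x / E k x) ≤ ηstar) ↔
    ((∀ x : S, Finset.univ.inf' Finset.univ_nonempty
        (fun k => R k x - ηstar * E k x) ≤ 0) ∧
      Finset.univ.inf' Finset.univ_nonempty
        (fun k => R k xstar - ηstar * E k xstar) = 0) := by
  have objectives_le (x : S) :=
    Finset.inf'_div_le_iff_inf'_sub_mul_nonpos Finset.univ_nonempty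
      (r := fun k => R k x) (fun k _ => hE k x) ηstar
  have parametric_nonneg_at_xstar :
      0 ≤ Finset.univ.inf' Finset.univ_nonempty (fun k => R k xstar - ηstar * E k xstar) :=
    (Finset.le_inf'_div_iff_inf'_sub_mul_nonneg Finset.univ_nonempty
      (fun k _ => hE k xstar) ηstar).1 hηstar.le
  constructor
  · intro h
    have parametric_nonpos (x : S) := (objectives_le x).1 (h x)
    exact ⟨parametric_nonpos, le_antisymm (parametric_nonpos xstar) parametric_nonneg_at_xstar⟩
  · rintro ⟨h, -⟩ x
    exact (objectives_le x).2 (h x)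

/-- Lemma 1 (generalized Dinkelbach equivalence for max-min fractional
programming): `x*` maximizes `min_k R_k(x)/E_k(x)` over `S` iff the parametric
problem `max_x min_k (R_k(x) − η*·E_k(x))` with `η* = min_k R_k(x*)/E_k(x*)`
has maximum value `0`, attained at `x*`. -/
theorem dinkelbach_maxmin_equivalence
    (S K : Type*) [Nonempty S] [Fintype K] [Nonempty K]
    (R E : K → S → ℝ) (hE : ∀ k x, 0 < E k x)
    (xstar : S) (ηstar : ℝ)
    (hηstar : ηstar = Finset.univ.inf' Finset.univ_nonempty
      (fun k => R k xstar / E k xstar)) :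
    (∀ x : S, Finset.univ.inf' Finset.univ_nonempty
        (fun k => R k x / E k x) ≤ ηstar) ↔
    ((∀ x : S, Finset.univ.inf' Finset.univ_nonempty
        (fun k => R k x - ηstar * E k x) ≤ 0) ∧
      Finset.univ.inf' Finset.univ_nonempty
        (fun k => R k xstar - ηstar * E k xstar) = 0) :=
  dinkelbach_maxmin_equivalence_general S K R E hE xstar ηstar hηstar
end

section
/- (Lemma 2) Fix K ∈ ℕ, T, B, C, σ², ζ, γ_c > 0, η ≥ 0, and per-user constants g_k > 0, v_k > 0, P_{r,k} ≥ 0, P_{c,k} ≥ 0, R_{k,min} ∈ ℝ, P_{E,k} ≥ 0. Then the feasible region of problem P3, namely the set of tuples (τ_0, (τ_k), (y_k), (f_k), Υ) ∈ ℝ × ℝ^K × ℝ^K × ℝ^K × ℝ satisfying, for all k: 0 ≤ τ_0 ≤ T, 0 < τ_k ≤ T, y_k ≥ 0, f_k ≥ 0, Υ ≥ 0, τ_0 + Σ_k τ_k ≤ T, (i) T·f_k/C + (B·τ_k/v_k)·log₂(1 + g_k·y_k/(τ_k·σ²)) ≥ R_{k,min}, (ii) τ_0·P_{r,k} + ζ·y_k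 + ζ·τ_k·P_{c,k} + T·γ_c·f_k³ ≤ τ_0·P_{E,k}, and (iii) T·f_k/C + (B·τ_k/v_k)·log₂(1 + g_k·y_k/(τ_k·σ²)) − η·(τ_0·P_{r,k} + ζ·y_k + ζ·τ_k·P_{c,k} + T·γ_c·f_k³) ≥ Υ, is a convex subset of ℝ^(3K+2). -/
/-!
Apart from affine constraints, P3 only involves the offloading rate
`(B τ / v) log₂ (1 + g y / (τ σ²))` and the computing energy `T γ_c f³`. The rate is a positive
multiple of the perspective `τ · h (y / τ)` of the concave function `h x = log (1 + (g / σ²) x)`,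
hence jointly concave in `(τ, y)`, while `f ↦ f³` is convex on `f ≥ 0` and enters the energy with
a nonnegative coefficient (and with `-η ≤ 0` in the objective). Each constraint therefore bounds a
concave function from below or a convex one from above, and survives convex combinations.
-/

open Real Set

section Perspective

variable {𝕜 : Type*} [Field 𝕜] [LinearOrder 𝕜] [IsStrictOrderedRing 𝕜]

theorem ConcaveOn.perspective {s : Set 𝕜} {h : 𝕜 → 𝕜} (hh : ConcaveOn 𝕜 s h) :
    ConcaveOn 𝕜 {q : 𝕜 × 𝕜 | 0 < q.1 ∧ q.2 / q.1 ∈ s} fun q ↦ q.1 * h (q.2 / q.1) := by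
  -- the combination of `(t₁, x₁)` and `(t₂, x₂)` has ratio `x / t` equal to the combination
  -- of the ratios `xᵢ / tᵢ` with weights `a t₁ / t` and `b t₂ / t`
  have key : ∀ ⦃t₁ x₁ t₂ x₂ a b : 𝕜⦄, 0 < t₁ → 0 < t₂ → 0 ≤ a → 0 ≤ b → a + b = 1 →
      0 < a * t₁ + b * t₂ ∧ 0 ≤ a * t₁ / (a * t₁ + b * t₂) ∧ 0 ≤ b * t₂ / (a * t₁ + b * t₂) ∧
      a * t₁ / (a * t₁ + b * t₂) + b * t₂ / (a * t₁ + b * t₂) = 1 ∧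
      (a * x₁ + b * x₂) / (a * t₁ + b * t₂) =
        a * t₁ / (a * t₁ + b * t₂) * (x₁ / t₁) + b * t₂ / (a * t₁ + b * t₂) * (x₂ / t₂) := by
    intro t₁ x₁ t₂ x₂ a b ht₁ ht₂ ha hb hab
    have ht : 0 < a * t₁ + b * t₂ := convex_Ioi 0 ht₁ ht₂ ha hb hab
    refine ⟨ht, by positivity, by positivity, by field_simp, by field_simp⟩
  refine ⟨?_, ?_⟩
  · rintro ⟨t₁, x₁⟩ ⟨ht₁, hx₁⟩ ⟨t₂, x₂⟩ ⟨ht₂, hx₂⟩ a b ha hb hab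
    obtain ⟨ht, hμ, hν, hμν, hx⟩ := key (x₁ := x₁) (x₂ := x₂) ht₁ ht₂ ha hb hab
    refine ⟨ht, ?_⟩
    simp only [Prod.smul_mk, Prod.mk_add_mk, smul_eq_mul]
    rw [hx]
    exact hh.1 hx₁ hx₂ hμ hν hμν
  · rintro ⟨t₁, x₁⟩ ⟨ht₁, hx₁⟩ ⟨t₂, x₂⟩ ⟨ht₂, hx₂⟩ a b ha hb hab
    obtain ⟨ht, hμ, hν, hμν, hx⟩ := key (x₁ := x₁) (x₂ := x₂) ht₁ ht₂ ha hb hab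
    simp only [Prod.smul_mk, Prod.mk_add_mk, smul_eq_mul]
    rw [hx]
    calc a * (t₁ * h (x₁ / t₁)) + b * (t₂ * h (x₂ / t₂))
        = (a * t₁ + b * t₂) * (a * t₁ / (a * t₁ + b * t₂) * h (x₁ / t₁) +
            b * t₂ / (a * t₁ + b * t₂) * h (x₂ / t₂)) := by field_simp
      _ ≤ _ := mul_le_mul_of_nonneg_left (hh.2 hx₁ hx₂ hμ hν hμν) ht.le

end Perspective

theorem concaveOn_log_one_add_mul {c : ℝ} (hc : 0 ≤ c) :
    ConcaveOn ℝ (Ici 0) fun x ↦ log (1 + c * x) := by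
  refine ⟨convex_Ici 0, fun x hx y hy a b ha hb hab ↦ ?_⟩
  have hx' : 1 + c * x ∈ Ioi 0 := mem_Ioi.2 (by have := mem_Ici.1 hx; positivity)
  have hy' : 1 + c * y ∈ Ioi 0 := mem_Ioi.2 (by have := mem_Ici.1 hy; positivity)
  have := strictConcaveOn_log_Ioi.concaveOn.2 hx' hy' ha hb hab
  convert this using 2
  simp only [smul_eq_mul]
  linear_combination hab.symm

theorem concaveOn_mul_log_one_add_div {c : ℝ} (hc : 0 ≤ c) :
    ConcaveOn ℝ {q : ℝ × ℝ | 0 < q.1 ∧ 0 ≤ q.2} fun q ↦ q.1 * log (1 + c * q.2 / q.1) := by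
  have hdom : {q : ℝ × ℝ | 0 < q.1 ∧ q.2 / q.1 ∈ Ici 0} = {q | 0 < q.1 ∧ 0 ≤ q.2} := by
    ext ⟨t, x⟩
    simp only [mem_ofPred_eq, mem_Ici, and_congr_right_iff]
    intro ht
    rw [le_div_iff₀ ht, zero_mul]
  rw [← hdom]
  simpa only [mul_div_assoc] using (concaveOn_log_one_add_mul hc).perspective

theorem concaveOn_mul_logb_one_add_div {B v g σ2 : ℝ} (hB : 0 ≤ B) (hv : 0 ≤ v) (hg : 0 ≤ g)
    (hσ : 0 ≤ σ2) :
    ConcaveOn ℝ {q : ℝ × ℝ | 0 < q.1 ∧ 0 ≤ q.2}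
      fun q ↦ (B * q.1 / v) * logb 2 (1 + g * q.2 / (q.1 * σ2)) := by
  refine ((concaveOn_mul_log_one_add_div (div_nonneg hg hσ)).smul
    (div_nonneg hB (mul_nonneg hv (log_nonneg one_le_two)))).congr fun q _ ↦ ?_
  simp only [smul_eq_mul, logb]
  ring_nf

open Finset in
theorem P3_feasible_region_convex_general
    (K : ℕ) (T B C σ2 ζ γc η : ℝ)
    (hT : 0 < T) (hB : 0 < B) (hσ : 0 < σ2)
    (hγ : 0 < γc) (hη : 0 ≤ η)
    (g v Pr Pc Rmin PE : Fin K → ℝ)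
    (hg : ∀ k, 0 < g k) (hv : ∀ k, 0 < v k) :
    Convex ℝ {p : ℝ × (Fin K → ℝ) × (Fin K → ℝ) × (Fin K → ℝ) × ℝ |
      (0 ≤ p.1 ∧ p.1 ≤ T) ∧
      (∀ k, 0 < p.2.1 k ∧ p.2.1 k ≤ T) ∧
      (∀ k, 0 ≤ p.2.2.1 k) ∧
      (∀ k, 0 ≤ p.2.2.2.1 k) ∧
      0 ≤ p.2.2.2.2 ∧
      p.1 + ∑ k, p.2.1 k ≤ T ∧
      (∀ k, Rmin k ≤ T * p.2.2.2.1 k / C + (B * p.2.1 k / v k) *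
        Real.logb 2 (1 + g k * p.2.2.1 k / (p.2.1 k * σ2))) ∧
      (∀ k, p.1 * Pr k + ζ * p.2.2.1 k + ζ * p.2.1 k * Pc k +
        T * γc * (p.2.2.2.1 k) ^ 3 ≤ p.1 * PE k) ∧
      (∀ k, p.2.2.2.2 ≤
        T * p.2.2.2.1 k / C + (B * p.2.1 k / v k) *
          Real.logb 2 (1 + g k * p.2.2.1 k / (p.2.1 k * σ2)) -
        η * (p.1 * Pr k + ζ * p.2.2.1 k + ζ * p.2.1 k * Pc k +
          T * γc * (p.2.2.2.1 k) ^ 3))} := by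
  rintro ⟨τ₀, τ, y, f, Υ⟩ hp ⟨τ₀', τ', y', f', Υ'⟩ hq a b ha hb hab
  dsimp only [mem_ofPred_eq] at hp hq
  obtain ⟨hτ₀, hτ, hy, hf, hΥ, hsum, hR, hE, hΥR⟩ := hp
  obtain ⟨hτ₀', hτ', hy', hf', hΥ', hsum', hR', hE', hΥR'⟩ := hq
  have hrate (k : Fin K) := (concaveOn_mul_logb_one_add_div hB.le (hv k).le (hg k).le hσ.le).2
    (show (τ k, y k) ∈ _ from ⟨(hτ k).1, hy k⟩) (show (τ' k, y' k) ∈ _ from ⟨(hτ' k).1, hy' k⟩)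
    ha hb hab
  have hcube (k : Fin K) := (convexOn_pow 3).2 (hf k) (hf' k) ha hb hab
  simp only [Prod.smul_mk, Prod.mk_add_mk, smul_eq_mul] at hrate hcube
  have hcompute (k : Fin K) :
      a * (T * f k / C) + b * (T * f' k / C) = T * (a * f k + b * f' k) / C := by
    ring
  simp only [mem_ofPred_eq, Prod.smul_mk, Prod.mk_add_mk, smul_eq_mul, Pi.add_apply, Pi.smul_apply]
  refine ⟨convex_Icc (0 : ℝ) T hτ₀ hτ₀' ha hb hab,
    fun k ↦ convex_Ioc (0 : ℝ) T (hτ k) (hτ' k) ha hb hab,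
    fun k ↦ convex_Ici (0 : ℝ) (hy k) (hy' k) ha hb hab,
    fun k ↦ convex_Ici (0 : ℝ) (hf k) (hf' k) ha hb hab,
    convex_Ici (0 : ℝ) hΥ hΥ' ha hb hab, ?_, fun k ↦ ?_, fun k ↦ ?_, fun k ↦ ?_⟩
  · have h := convex_Iic T hsum hsum' ha hb hab
    simp only [Set.mem_Iic, smul_eq_mul] at h
    rw [sum_add_distrib, ← mul_sum, ← mul_sum]
    linarith
  · have h := convex_Ici (Rmin k) (hR k) (hR' k) ha hb hab
    simp only [Set.mem_Ici, smul_eq_mul] at h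
    linarith [hrate k, hcompute k]
  · have hTγ : 0 ≤ T * γc := by positivity
    linarith [mul_le_mul_of_nonneg_left (hE k) ha, mul_le_mul_of_nonneg_left (hE' k) hb,
      mul_le_mul_of_nonneg_left (hcube k) hTγ]
  · have hηTγ : 0 ≤ η * (T * γc) := by positivity
    linarith [mul_le_mul_of_nonneg_left (hΥR k) ha, mul_le_mul_of_nonneg_left (hΥR' k) hb,
      mul_le_mul_of_nonneg_left (hcube k) hηTγ, hrate k, hcompute k]

open Finset in
/-- Lemma 2: the feasible region of the convex reformulation P3 (TDMA, partial
offloading, energy variables `y_k = τ_k·P_k`, station power fixed at `P_th`,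
Dinkelbach parameter `η`, epigraph variable `Υ`) is a convex subset of
`ℝ × ℝ^K × ℝ^K × ℝ^K × ℝ`. A point is `(τ₀, τ, y, f, Υ)`. -/
theorem P3_feasible_region_convex
    (K : ℕ) (T B C σ2 ζ γc η : ℝ)
    (hT : 0 < T) (hB : 0 < B) (hC : 0 < C) (hσ : 0 < σ2) (hζ : 0 < ζ)
    (hγ : 0 < γc) (hη : 0 ≤ η)
    (g v Pr Pc Rmin PE : Fin K → ℝ)
    (hg : ∀ k, 0 < g k) (hv : ∀ k, 0 < v k) (hPr : ∀ k, 0 ≤ Pr k)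
    (hPc : ∀ k, 0 ≤ Pc k) (hPE : ∀ k, 0 ≤ PE k) :
    Convex ℝ {p : ℝ × (Fin K → ℝ) × (Fin K → ℝ) × (Fin K → ℝ) × ℝ |
      (0 ≤ p.1 ∧ p.1 ≤ T) ∧
      (∀ k, 0 < p.2.1 k ∧ p.2.1 k ≤ T) ∧
      (∀ k, 0 ≤ p.2.2.1 k) ∧
      (∀ k, 0 ≤ p.2.2.2.1 k) ∧
      0 ≤ p.2.2.2.2 ∧
      p.1 + ∑ k, p.2.1 k ≤ T ∧
      (∀ k, Rmin k ≤ T * p.2.2.2.1 k / C + (B * p.2.1 k / v k) *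
        Real.logb 2 (1 + g k * p.2.2.1 k / (p.2.1 k * σ2))) ∧
      (∀ k, p.1 * Pr k + ζ * p.2.2.1 k + ζ * p.2.1 k * Pc k +
        T * γc * (p.2.2.2.1 k) ^ 3 ≤ p.1 * PE k) ∧
      (∀ k, p.2.2.2.2 ≤
        T * p.2.2.2.1 k / C + (B * p.2.1 k / v k) *
          Real.logb 2 (1 + g k * p.2.2.1 k / (p.2.1 k * σ2)) -
        η * (p.1 * Pr k + ζ * p.2.2.1 k + ζ * p.2.1 k * Pc k +
          T * γc * (p.2.2.2.1 k) ^ 3))} :=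
  P3_feasible_region_convex_general K T B C σ2 ζ γc η hT hB hσ hγ hη g v Pr Pc Rmin PE hg hv
end

section
/- (Theorem 2, offloading power) Let B, v, ζ, g, σ² > 0, and let λ ≥ 0, ρ ≥ 0, θ ≥ 0, η ≥ 0 satisfy λ + θ > 0 and ρ + θ·η > 0. Then the concave function y ↦ ((λ + θ)·B/v)·log₂(1 + g·y/σ²) − ζ·(ρ + θ·η)·y on [0, ∞) attains its maximum at the unique point y* = max{0, (λ + θ)·B/(ζ·v·(ln 2)·(ρ + θ·η)) − σ²/g}, and y* is the unique maximizer on [0, ∞). -/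
/-! The objective is `A · log (1 + a y) − c y` with `A = (λ+θ)B/(v ln 2)`, `c = ζ(ρ+θη)` and
`a = g/σ²`. The tangent-line bound `log u − log u₀ < (u − u₀)/u₀` (for `u ≠ u₀`) gives
`f y − f y* < (A a/(1 + a y*) − c)(y − y*)`, and the right side is `≤ 0` on `[0, ∞)`: at an interior
`y*` the slope `A a/(1 + a y*) − c` vanishes, and at `y* = 0` it is `≤ 0` while `y − y* ≥ 0`. -/

open Real

theorem Real.log_sub_log_lt_div {x x₀ : ℝ} (hx : 0 < x) (hx₀ : 0 < x₀) (hne : x ≠ x₀) :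
    log x - log x₀ < (x - x₀) / x₀ := by
  have hratio : x / x₀ ≠ 1 := by rwa [ne_eq, div_eq_one_iff_eq hx₀.ne']
  calc log x - log x₀ = log (x / x₀) := (log_div hx.ne' hx₀.ne').symm
    _ < x / x₀ - 1 := log_lt_sub_one_of_pos (div_pos hx hx₀) hratio
    _ = (x - x₀) / x₀ := by field_simp

theorem mul_log_one_add_mul_sub_mul_lt {A c a y : ℝ} (hA : 0 < A) (hc : 0 < c) (ha : 0 < a)
    (hy : 0 ≤ y) (hne : y ≠ max 0 (A / c - 1 / a)) :
    A * log (1 + a * y) - c * y <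
      A * log (1 + a * max 0 (A / c - 1 / a)) - c * max 0 (A / c - 1 / a) := by
  set y₀ := max 0 (A / c - 1 / a) with hy₀_def
  have hy₀ : 0 ≤ y₀ := le_max_left _ _
  have hu₀ : 0 < 1 + a * y₀ := by positivity
  have tangent : log (1 + a * y) - log (1 + a * y₀) < a * (y - y₀) / (1 + a * y₀) := by
    have hne' : 1 + a * y ≠ 1 + a * y₀ := by
      intro h
      exact hne (mul_left_cancel₀ ha.ne' (add_left_cancel h))
    convert log_sub_log_lt_div (by positivity) hu₀ hne' using 2
    ring
  have slope : (A * a / (1 + a * y₀) - c) * (y - y₀) ≤ 0 := by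
    rcases le_total (A / c - 1 / a) 0 with hcorner | hinterior
    · have hzero : y₀ = 0 := max_eq_left hcorner
      have hAa : A * a ≤ c := by
        rw [sub_nonpos, div_le_div_iff₀ hc ha] at hcorner
        linarith
      rw [hzero, mul_zero, add_zero, div_one, sub_zero]
      exact mul_nonpos_of_nonpos_of_nonneg (by linarith) hy
    · have hflat : A * a / (1 + a * y₀) = c := by
        rw [hy₀_def, max_eq_right hinterior]
        field_simp
        ring
      rw [hflat, sub_self, zero_mul]
  calc A * log (1 + a * y) - c * y
      = A * log (1 + a * y₀) - c * y₀
          + (A * (log (1 + a * y) - log (1 + a * y₀)) - c * (y - y₀)) := by ring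
    _ < A * log (1 + a * y₀) - c * y₀
          + (A * (a * (y - y₀) / (1 + a * y₀)) - c * (y - y₀)) := by gcongr
    _ = A * log (1 + a * y₀) - c * y₀ + (A * a / (1 + a * y₀) - c) * (y - y₀) := by ring
    _ ≤ A * log (1 + a * y₀) - c * y₀ := by linarith

section StrictMax

variable {α β : Type*} [Preorder β] {f : α → β} {s : Set α} {x x₀ : α}

theorem isMaxOn_of_forall_ne_lt (h : ∀ y ∈ s, y ≠ x₀ → f y < f x₀) : IsMaxOn f s x₀ := by
  intro y hy
  rcases eq_or_ne y x₀ with rfl | hne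
  · exact le_rfl
  · exact (h y hy hne).le

theorem eq_of_isMaxOn_of_forall_ne_lt (h : ∀ y ∈ s, y ≠ x₀ → f y < f x₀) (hx₀ : x₀ ∈ s)
    (hx : x ∈ s) (hmax : IsMaxOn f s x) : x = x₀ := by
  by_contra hne
  exact (h x hx hne).not_ge (hmax hx₀)

end StrictMax

theorem thm2_optimal_offloading_power_general
    (B v ζ g σ2 lam ρ θ η : ℝ)
    (hB : 0 < B) (hv : 0 < v) (hζ : 0 < ζ) (hg : 0 < g) (hσ : 0 < σ2)
    (h1 : 0 < lam + θ) (h2 : 0 < ρ + θ * η) :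
    let φ : ℝ → ℝ := fun y =>
      ((lam + θ) * B / v) * Real.logb 2 (1 + g * y / σ2) - ζ * (ρ + θ * η) * y
    let ystar : ℝ :=
      max 0 ((lam + θ) * B / (ζ * v * Real.log 2 * (ρ + θ * η)) - σ2 / g)
    ystar ∈ Set.Ici (0:ℝ) ∧ IsMaxOn φ (Set.Ici 0) ystar ∧
      ∀ x ∈ Set.Ici (0:ℝ), IsMaxOn φ (Set.Ici 0) x → x = ystar := by
  intro φ ystar
  set A := (lam + θ) * B / (v * log 2)
  set c := ζ * (ρ + θ * η)
  set a := g / σ2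
  have hA : 0 < A := div_pos (by positivity) (mul_pos hv (log_pos one_lt_two))
  have hφ : φ = fun y => A * log (1 + a * y) - c * y := by
    funext y
    simp only [φ, A, a, c, logb, mul_div_right_comm g y σ2]
    ring
  have hystar : ystar = max 0 (A / c - 1 / a) := by
    simp only [ystar, A, a, c, one_div_div]
    congr 2
    field_simp
  have hlt : ∀ y ∈ Set.Ici (0:ℝ), y ≠ ystar → φ y < φ ystar := fun y hy hne => by
    rw [hφ, hystar]
    rw [hystar] at hne
    exact mul_log_one_add_mul_sub_mul_lt hA (mul_pos hζ h2) (div_pos hg hσ) hy hne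
  have hmem : ystar ∈ Set.Ici (0:ℝ) := Set.mem_Ici.mpr (le_max_left _ _)
  exact ⟨hmem, isMaxOn_of_forall_ne_lt hlt,
    fun x hx hmax => eq_of_isMaxOn_of_forall_ne_lt hlt hmem hx hmax⟩

/-- Theorem 2 (offloading power): the concave function
`y ↦ ((λ+θ)·B/v)·log₂(1 + g·y/σ²) − ζ·(ρ+θ·η)·y` attains its maximum on
`[0, ∞)` at the unique point
`y* = max{0, (λ+θ)·B/(ζ·v·ln 2·(ρ+θ·η)) − σ²/g}`. -/
theorem thm2_optimal_offloading_power
    (B v ζ g σ2 lam ρ θ η : ℝ)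
    (hB : 0 < B) (hv : 0 < v) (hζ : 0 < ζ) (hg : 0 < g) (hσ : 0 < σ2)
    (hlam : 0 ≤ lam) (hρ : 0 ≤ ρ) (hθ : 0 ≤ θ) (hη : 0 ≤ η)
    (h1 : 0 < lam + θ) (h2 : 0 < ρ + θ * η) :
    let φ : ℝ → ℝ := fun y =>
      ((lam + θ) * B / v) * Real.logb 2 (1 + g * y / σ2) - ζ * (ρ + θ * η) * y
    let ystar : ℝ :=
      max 0 ((lam + θ) * B / (ζ * v * Real.log 2 * (ρ + θ * η)) - σ2 / g)
    ystar ∈ Set.Ici (0:ℝ) ∧ IsMaxOn φ (Set.Ici 0) ystar ∧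
      ∀ x ∈ Set.Ici (0:ℝ), IsMaxOn φ (Set.Ici 0) x → x = ystar :=
  thm2_optimal_offloading_power_general B v ζ g σ2 lam ρ θ η hB hv hζ hg hσ h1 h2
end

section
/- (Theorem 3, existence and uniqueness of the channel-gain threshold ω) Let λ, θ, B, v, ζ, η, σ² > 0, β ≥ 0, P_c ≥ 0 with ζ·θ·η·P_c + β > 0. Define w₀ := ζ·v·θ·η·σ²·(ln 2)/((λ + θ)·B) and, for w > 0, Γ(w) := (B·(λ + θ)/v)·log₂((λ + θ)·B·w/(ζ·v·θ·η·σ²·(ln 2))) − (λ + θ)·B/(v·ln 2) + ζ·θ·η·σ²/w − ζ·θ·η·P_c − β. Then Γ(w₀) = −ζ·θ·η·P_c − β < 0, Γ is strictly increasing on [w₀, ∞), Γ(w) → +∞ as w → +∞, and there exists a unique w* ∈ (w₀, ∞) with Γ(w*) = 0. -/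
/-!
Write `C = B(λ + θ)/(v ln 2)`. Since `ζθησ² = C w₀` and the argument of `log₂` is `w / w₀`,
`Γ(w) = C (g(w / w₀) - 1) - ζθηP_c - β` with `g(x) = ln x + 1/x`. Now `g(1) = 1`,
`g'(x) = (x - 1)/x² > 0` for `x > 1` and `g(x) → ∞`, so `Γ` rises strictly from `Γ(w₀) < 0` to `+∞`
and has exactly one root beyond `w₀` by the intermediate value theorem.
-/

open Real Set Filter

lemma strictMonoOn_log_add_inv : StrictMonoOn (fun x : ℝ => log x + x⁻¹) (Ici 1) := by
  have hcont : ContinuousOn (fun x : ℝ => log x + x⁻¹) (Ici 1) := by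
    refine ContinuousOn.add (continuousOn_log.mono ?_) (continuousOn_inv₀.mono ?_) <;>
      exact fun x (hx : 1 ≤ x) => by simp only [mem_compl_iff, mem_singleton_iff]; positivity
  refine strictMonoOn_of_deriv_pos (convex_Ici 1) hcont fun x hx => ?_
  rw [interior_Ici] at hx
  have hx0 : 0 < x := zero_lt_one.trans hx
  have hderiv : HasDerivAt (fun x : ℝ => log x + x⁻¹) (x⁻¹ + -(x ^ 2)⁻¹) x :=
    (hasDerivAt_log hx0.ne').add (hasDerivAt_inv hx0.ne')
  have hformula : x⁻¹ + -(x ^ 2)⁻¹ = (x - 1) / x ^ 2 := by field_simp; ring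
  rw [hderiv.deriv, hformula]
  exact div_pos (sub_pos.2 hx) (by positivity)

lemma tendsto_log_add_inv_atTop : Tendsto (fun x : ℝ => log x + x⁻¹) atTop atTop :=
  tendsto_atTop_add_right_of_le' atTop 0 tendsto_log_atTop
    ((eventually_ge_atTop 0).mono fun _ hx => inv_nonneg.2 hx)

theorem existsUnique_mem_Ioi_eq_zero {f : ℝ → ℝ} {a : ℝ} (hcont : ContinuousOn f (Ici a))
    (hmono : StrictMonoOn f (Ici a)) (ha : f a < 0) (htop : Tendsto f atTop atTop) :
    ∃! x, x ∈ Ioi a ∧ f x = 0 := by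
  obtain ⟨b, hfb, hab⟩ := ((htop.eventually_gt_atTop 0).and (eventually_gt_atTop a)).exists
  obtain ⟨x, hx, hfx⟩ := intermediate_value_Ioo hab.le (hcont.mono Icc_subset_Ici_self) ⟨ha, hfb⟩
  refine ⟨x, ⟨hx.1, hfx⟩, fun y ⟨hy, hfy⟩ => ?_⟩
  exact hmono.injOn (mem_Ici.2 hy.le) (mem_Ici.2 hx.1.le) (hfy.trans hfx.symm)

section Rescaled

variable {C w₀ : ℝ} (K : ℝ)

lemma strictMonoOn_rescaled_log_add_inv (hC : 0 < C) (hw₀ : 0 < w₀) :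
    StrictMonoOn (fun w => C * (log (w / w₀) + (w / w₀)⁻¹) - K) (Ici w₀) := by
  intro a ha b hb hab
  have key := strictMonoOn_log_add_inv ((one_le_div hw₀).2 ha) ((one_le_div hw₀).2 hb)
    (div_lt_div_of_pos_right hab hw₀)
  dsimp only at key ⊢
  gcongr

lemma tendsto_rescaled_log_add_inv_atTop (hC : 0 < C) (hw₀ : 0 < w₀) :
    Tendsto (fun w => C * (log (w / w₀) + (w / w₀)⁻¹) - K) atTop atTop :=
  tendsto_atTop_add_const_right _ _ <| Tendsto.const_mul_atTop hC <|
    tendsto_log_add_inv_atTop.comp (tendsto_id.atTop_div_const hw₀)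

lemma continuousOn_rescaled_log_add_inv (hw₀ : 0 < w₀) :
    ContinuousOn (fun w => C * (log (w / w₀) + (w / w₀)⁻¹) - K) (Ioi 0) := by
  have hne : ∀ w ∈ Ioi (0 : ℝ), w / w₀ ≠ 0 := fun w hw => (div_pos hw hw₀).ne'
  have hdiv : ContinuousOn (fun w => w / w₀) (Ioi 0) := continuousOn_id.div_const w₀
  exact (continuousOn_const.mul ((hdiv.log hne).add (hdiv.inv₀ hne))).sub continuousOn_const

end Rescaled

theorem thm3_threshold_exists_unique_general
    (lam θ B v ζ η σ2 β Pc : ℝ)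
    (hlam : 0 < lam) (hθ : 0 < θ) (hB : 0 < B) (hv : 0 < v) (hζ : 0 < ζ)
    (hη : 0 < η) (hσ : 0 < σ2)
    (hpos : 0 < ζ * θ * η * Pc + β) :
    let w0 : ℝ := ζ * v * θ * η * σ2 * Real.log 2 / ((lam + θ) * B)
    let Γ : ℝ → ℝ := fun w =>
      (B * (lam + θ) / v) *
        Real.logb 2 ((lam + θ) * B * w / (ζ * v * θ * η * σ2 * Real.log 2)) -
      (lam + θ) * B / (v * Real.log 2) + ζ * θ * η * σ2 / w - ζ * θ * η * Pc - β
    Γ w0 = -(ζ * θ * η * Pc) - β ∧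
    Γ w0 < 0 ∧
    StrictMonoOn Γ (Set.Ici w0) ∧
    Filter.Tendsto Γ Filter.atTop Filter.atTop ∧
    ∃! w : ℝ, w ∈ Set.Ioi w0 ∧ Γ w = 0 := by
  intro w0 Γ
  set C := (lam + θ) * B / (v * log 2)
  set K := C + (ζ * θ * η * Pc + β)
  have hC : 0 < C := by positivity
  have hw0 : 0 < w0 := by positivity
  have hd : ζ * θ * η * σ2 = C * w0 := by simp only [C, w0]; field_simp
  have hΓ : EqOn Γ (fun w => C * (log (w / w0) + (w / w0)⁻¹) - K) (Ioi 0) := by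
    intro w (hw : 0 < w)
    have harg : (lam + θ) * B * w / (ζ * v * θ * η * σ2 * log 2) = w / w0 := by
      simp only [w0]; field_simp
    simp only [Γ, harg, logb]
    rw [hd]
    simp only [K, C]
    field_simp
    ring
  have hmono := (strictMonoOn_rescaled_log_add_inv K hC hw0).congr
    fun w hw => (hΓ (hw0.trans_le hw)).symm
  have hcont := (continuousOn_rescaled_log_add_inv K hw0).congr hΓ
  have htop := (tendsto_rescaled_log_add_inv_atTop K hC hw0).congr'
    ((eventually_gt_atTop 0).mono fun w hw => (hΓ hw).symm)
  have hΓw0 : Γ w0 = -(ζ * θ * η * Pc) - β := by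
    rw [hΓ hw0]
    simp only [div_self hw0.ne', log_one, inv_one, K]
    ring
  have hneg : Γ w0 < 0 := by linarith
  exact ⟨hΓw0, hneg, hmono, htop,
    existsUnique_mem_Ioi_eq_zero (hcont.mono fun _ hw => hw0.trans_le hw) hmono hneg htop⟩

/-- Theorem 3 (existence and uniqueness of the channel-gain threshold `ω`):
with `w₀ = ζ·v·θ·η·σ²·ln 2/((λ+θ)·B)`, the function `Γ` of equation (15)
satisfies `Γ(w₀) = −ζ·θ·η·P_c − β < 0`, is strictly increasing on `[w₀, ∞)`,
tends to `+∞` at `+∞`, and has a unique root `w* ∈ (w₀, ∞)`. -/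
theorem thm3_threshold_exists_unique
    (lam θ B v ζ η σ2 β Pc : ℝ)
    (hlam : 0 < lam) (hθ : 0 < θ) (hB : 0 < B) (hv : 0 < v) (hζ : 0 < ζ)
    (hη : 0 < η) (hσ : 0 < σ2) (hβ : 0 ≤ β) (hPc : 0 ≤ Pc)
    (hpos : 0 < ζ * θ * η * Pc + β) :
    let w0 : ℝ := ζ * v * θ * η * σ2 * Real.log 2 / ((lam + θ) * B)
    let Γ : ℝ → ℝ := fun w =>
      (B * (lam + θ) / v) *
        Real.logb 2 ((lam + θ) * B * w / (ζ * v * θ * η * σ2 * Real.log 2)) -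
      (lam + θ) * B / (v * Real.log 2) + ζ * θ * η * σ2 / w - ζ * θ * η * Pc - β
    Γ w0 = -(ζ * θ * η * Pc) - β ∧
    Γ w0 < 0 ∧
    StrictMonoOn Γ (Set.Ici w0) ∧
    Filter.Tendsto Γ Filter.atTop Filter.atTop ∧
    ∃! w : ℝ, w ∈ Set.Ioi w0 ∧ Γ w = 0 :=
  thm3_threshold_exists_unique_general lam θ B v ζ η σ2 β Pc hlam hθ hB hv hζ hη hσ hpos
end

section
/- (Lemma 3) Consider problem P4 (binary offloading, TDMA) with user set K partitioned into a local-computing set M₀ and an offloading set M₁, and suppose h_k · P_th > P_0 for every user k. Let (P_s, τ_0, (τ_n)_{n∈M₁}, (P_n)_{n∈M₁}, (f_m)_{m∈M₀}) be any feasible point, i.e.: 0 ≤ P_s ≤ P_th; 0 ≤ τ_0 ≤ T; 0 ≤ τ_n ≤ T, Σ_{n∈M₁} τ_n ≤ T, P_n ≥ 0 for n ∈ M₁; f_m ≥ 0 for m ∈ M₀; T·f_m/C ≥ R_{m,min} for m ∈ M₀; (B·τ_n/v_n)·log₂(1 + g_n·P_n/σ²) ≥ R_{n,min} for n ∈ M₁;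 τ_0·P_{r,m} + T·γ_c·f_m³ ≤ τ_0·P_{E,m}(P_s) for m ∈ M₀; and τ_0·P_{r,n} + ζ·τ_n·(P_n + P_{c,n}) ≤ τ_0·P_{E,n}(P_s) for n ∈ M₁. Then there exists τ_0′ with 0 ≤ τ_0′ ≤ τ_0 such that the point with P_s replaced by P_th and τ_0 replaced by τ_0′ (all other variables unchanged) is also feasible, every user's computed bits are unchanged, and every user's consumed energy (τ_0′·P_{r,m} + T·γ_c·f_m³ for m ∈ M₀, and τ_0′·P_{r,n} + ζ·τ_n·(P_n + P_{c,n}) for n ∈ M₁) is no larger than before. Consequently the maximum of the max-min computation efficiency over the feasible set of P4 is achieved with P_s = P_th. -/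
/-! The logistic harvested power is nondecreasing in the station power, so raising `P_s` to `P_th`
can only relax the energy-causality constraints while leaving every other constraint, the computed
bits and the consumed energies untouched; the harvesting time `τ₀` may therefore be kept. Hence each
feasible value of the objective is also attained with `P_s = P_th`, and the two sets of objective
values coincide. -/

theorem monotone_max_zero_mul_div_one_add_exp {a c μ h ψ : ℝ} (ha : 0 ≤ a) (hc : 0 ≤ c)
    (hμ : 0 ≤ μ) (hh : 0 ≤ h) :
    Monotone fun x => max 0 (a * (c / (1 + Real.exp (-μ * h * x + ψ)) - 1)) := by
  intro x y hxy
  have hexp : Real.exp (-μ * h * y + ψ) ≤ Real.exp (-μ * h * x + ψ) :=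
    Real.exp_le_exp.2 (by nlinarith [mul_nonneg hμ hh])
  dsimp only
  gcongr max 0 (a * (c / (1 + ?_) - 1))

open Finset in
theorem lemma3_station_power_at_max_binary_general
    (K : ℕ) (T C B σ2 ζ γc : ℝ)
    (h g v Pr Pc Rmin Pmax : Fin K → ℝ)
    (hh : ∀ k, 0 < h k)
    (hPmax : ∀ k, 0 < Pmax k)
    (μ ψ P0 Pth : ℝ) (hμ : 0 < μ) (hPth : 0 < Pth)
    -- non-linear EH model: harvested power of user k at station power Ps
    (PE : Fin K → ℝ → ℝ)
    (hPE : ∀ k Ps, PE k Ps = max 0 ((Pmax k / Real.exp (-μ * P0 + ψ)) *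
      ((1 + Real.exp (-μ * P0 + ψ)) / (1 + Real.exp (-μ * h k * Ps + ψ)) - 1)))
    -- the partition of the user set into local computing (M0) and offloading (M1)
    (M0 M1 : Finset (Fin K))
    -- per-user consumed energy and computation efficiency
    (Energy : ℝ → (Fin K → ℝ) → (Fin K → ℝ) → (Fin K → ℝ) → Fin K → ℝ)
    (CE : ℝ → (Fin K → ℝ) → (Fin K → ℝ) → (Fin K → ℝ) → Fin K → ℝ)
    -- feasibility for P4
    (Feas : ℝ → ℝ → (Fin K → ℝ) → (Fin K → ℝ) → (Fin K → ℝ) → Prop)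
    (hFeas : ∀ Ps τ0 τ P f, Feas Ps τ0 τ P f ↔
      (0 ≤ Ps ∧ Ps ≤ Pth) ∧ (0 ≤ τ0 ∧ τ0 ≤ T) ∧
      (∀ n ∈ M1, 0 ≤ τ n ∧ τ n ≤ T) ∧ (∑ n ∈ M1, τ n) ≤ T ∧
      (∀ n ∈ M1, 0 ≤ P n) ∧ (∀ m ∈ M0, 0 ≤ f m) ∧
      (∀ m ∈ M0, Rmin m ≤ T * f m / C) ∧
      (∀ n ∈ M1, Rmin n ≤ (B * τ n / v n) * Real.logb 2 (1 + g n * P n / σ2)) ∧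
      (∀ m ∈ M0, τ0 * Pr m + T * γc * (f m) ^ 3 ≤ τ0 * PE m Ps) ∧
      (∀ n ∈ M1, τ0 * Pr n + ζ * τ n * (P n + Pc n) ≤ τ0 * PE n Ps)) :
    -- energy reduction while keeping feasibility and the computed bits
    (∀ Ps τ0 τ P f, Feas Ps τ0 τ P f →
      ∃ τ0' : ℝ, 0 ≤ τ0' ∧ τ0' ≤ τ0 ∧ Feas Pth τ0' τ P f ∧
        ∀ k, Energy τ0' τ P f k ≤ Energy τ0 τ P f k) ∧
    -- consequently, the max-min computation efficiency is achieved with Ps = Pth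
    sSup {r : ℝ | ∃ Ps τ0 τ P f, Feas Ps τ0 τ P f ∧
        r = ⨅ k : Fin K, CE τ0 τ P f k} =
    sSup {r : ℝ | ∃ τ0 τ P f, Feas Pth τ0 τ P f ∧
        r = ⨅ k : Fin K, CE τ0 τ P f k} := by
  have harvest_le : ∀ k Ps, Ps ≤ Pth → PE k Ps ≤ PE k Pth := fun k Ps hle => by
    rw [hPE, hPE]
    exact monotone_max_zero_mul_div_one_add_exp (div_nonneg (hPmax k).le (Real.exp_pos _).le)
      (by positivity) hμ.le (hh k).le hle
  have feas_at_max : ∀ Ps τ0 τ P f, Feas Ps τ0 τ P f → Feas Pth τ0 τ P f := by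
    intro Ps τ0 τ P f hfeas
    rw [hFeas] at hfeas ⊢
    obtain ⟨⟨-, hPs⟩, hτ0, hτ, hsum, hP, hf, hbitsLoc, hbitsOff, henLoc, henOff⟩ := hfeas
    refine ⟨⟨hPth.le, le_rfl⟩, hτ0, hτ, hsum, hP, hf, hbitsLoc, hbitsOff, ?_, ?_⟩
    · exact fun m hm => (henLoc m hm).trans
        (mul_le_mul_of_nonneg_left (harvest_le m Ps hPs) hτ0.1)
    · exact fun n hn => (henOff n hn).trans
        (mul_le_mul_of_nonneg_left (harvest_le n Ps hPs) hτ0.1)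
  refine ⟨fun Ps τ0 τ P f hfeas =>
    ⟨τ0, ((hFeas _ _ _ _ _).1 hfeas).2.1.1, le_rfl, feas_at_max _ _ _ _ _ hfeas, fun _ => le_rfl⟩,
    congrArg sSup (Set.ext fun r => ⟨?_, ?_⟩)⟩
  · rintro ⟨Ps, τ0, τ, P, f, hfeas, rfl⟩
    exact ⟨τ0, τ, P, f, feas_at_max _ _ _ _ _ hfeas, rfl⟩
  · rintro ⟨τ0, τ, P, f, hfeas, rfl⟩
    exact ⟨Pth, τ0, τ, P, f, hfeas, rfl⟩

open Finset in
/-- Lemma 3: in the TDMA wireless-powered MEC network under the binary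
computation offloading mode (users partitioned into a local-computing set `M₀`
and an offloading set `M₁`), any feasible point of P4 can be modified, by
setting the station power to `P_th` and suitably shrinking the
energy-harvesting time, into another feasible point with unchanged computed
bits and no larger consumed energy for every user; consequently the max-min
computation efficiency over the feasible set of P4 is achieved with
`P_s = P_th`. -/
theorem lemma3_station_power_at_max_binary
    (K : ℕ) (hK : 0 < K) (T C B σ2 ζ γc : ℝ)
    (hT : 0 < T) (hC : 0 < C) (hB : 0 < B) (hσ : 0 < σ2) (hζ : 0 < ζ) (hγ : 0 < γc)
    (h g v Pr Pc Rmin Pmax : Fin K → ℝ)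
    (hh : ∀ k, 0 < h k) (hg : ∀ k, 0 < g k) (hv : ∀ k, 0 < v k)
    (hPr : ∀ k, 0 ≤ Pr k) (hPc : ∀ k, 0 ≤ Pc k) (hRmin : ∀ k, 0 < Rmin k)
    (hPmax : ∀ k, 0 < Pmax k)
    (μ ψ P0 Pth : ℝ) (hμ : 0 < μ) (hP0 : 0 ≤ P0) (hPth : 0 < Pth)
    (hthr : ∀ k, P0 < h k * Pth)
    -- non-linear EH model: harvested power of user k at station power Ps
    (PE : Fin K → ℝ → ℝ)
    (hPE : ∀ k Ps, PE k Ps = max 0 ((Pmax k / Real.exp (-μ * P0 + ψ)) *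
      ((1 + Real.exp (-μ * P0 + ψ)) / (1 + Real.exp (-μ * h k * Ps + ψ)) - 1)))
    -- the partition of the user set into local computing (M0) and offloading (M1)
    (M0 M1 : Finset (Fin K))
    (hpart : M0 ∪ M1 = Finset.univ) (hdisj : Disjoint M0 M1)
    -- per-user consumed energy and computation efficiency
    (Energy : ℝ → (Fin K → ℝ) → (Fin K → ℝ) → (Fin K → ℝ) → Fin K → ℝ)
    (hEnergy : ∀ τ0 τ P f k, Energy τ0 τ P f k =
      if k ∈ M0 then τ0 * Pr k + T * γc * (f k) ^ 3
      else τ0 * Pr k + ζ * τ k * (P k + Pc k))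
    (CE : ℝ → (Fin K → ℝ) → (Fin K → ℝ) → (Fin K → ℝ) → Fin K → ℝ)
    (hCE : ∀ τ0 τ P f k, CE τ0 τ P f k =
      (if k ∈ M0 then T * f k / C
       else (B * τ k / v k) * Real.logb 2 (1 + g k * P k / σ2)) /
      Energy τ0 τ P f k)
    -- feasibility for P4
    (Feas : ℝ → ℝ → (Fin K → ℝ) → (Fin K → ℝ) → (Fin K → ℝ) → Prop)
    (hFeas : ∀ Ps τ0 τ P f, Feas Ps τ0 τ P f ↔
      (0 ≤ Ps ∧ Ps ≤ Pth) ∧ (0 ≤ τ0 ∧ τ0 ≤ T) ∧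
      (∀ n ∈ M1, 0 ≤ τ n ∧ τ n ≤ T) ∧ (∑ n ∈ M1, τ n) ≤ T ∧
      (∀ n ∈ M1, 0 ≤ P n) ∧ (∀ m ∈ M0, 0 ≤ f m) ∧
      (∀ m ∈ M0, Rmin m ≤ T * f m / C) ∧
      (∀ n ∈ M1, Rmin n ≤ (B * τ n / v n) * Real.logb 2 (1 + g n * P n / σ2)) ∧
      (∀ m ∈ M0, τ0 * Pr m + T * γc * (f m) ^ 3 ≤ τ0 * PE m Ps) ∧
      (∀ n ∈ M1, τ0 * Pr n + ζ * τ n * (P n + Pc n) ≤ τ0 * PE n Ps)) :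
    -- energy reduction while keeping feasibility and the computed bits
    (∀ Ps τ0 τ P f, Feas Ps τ0 τ P f →
      ∃ τ0' : ℝ, 0 ≤ τ0' ∧ τ0' ≤ τ0 ∧ Feas Pth τ0' τ P f ∧
        ∀ k, Energy τ0' τ P f k ≤ Energy τ0 τ P f k) ∧
    -- consequently, the max-min computation efficiency is achieved with Ps = Pth
    sSup {r : ℝ | ∃ Ps τ0 τ P f, Feas Ps τ0 τ P f ∧
        r = ⨅ k : Fin K, CE τ0 τ P f k} =
    sSup {r : ℝ | ∃ τ0 τ P f, Feas Pth τ0 τ P f ∧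
        r = ⨅ k : Fin K, CE τ0 τ P f k} :=
  lemma3_station_power_at_max_binary_general K T C B σ2 ζ γc h g v Pr Pc Rmin Pmax hh hPmax μ ψ P0
    Pth hμ hPth PE hPE M0 M1 Energy CE Feas hFeas
end

section
/- (Lemma 4) Consider problem P7 (partial offloading, NOMA) with K users and suppose h_k · P_th > P_0 for every k. Let (P_s, τ_0, τ_1, (P_k), (f_k)) be any feasible point, i.e.: 0 ≤ P_s ≤ P_th; 0 ≤ τ_0 ≤ T; 0 ≤ τ_1 ≤ T; τ_0 + τ_1 ≤ T; P_k ≥ 0 and f_k ≥ 0 for all k; R_k ≥ R_{k,min} for all k, where R_k := T·f_k/C + (B·τ_1/v_k)·log₂(1 + g_k·P_k/(Σ_{i=k+1}^K g_i·P_i + σ²)) for 1 ≤ k ≤ K−1 and R_K := T·f_K/C + (B·τ_1/v_K)·log₂(1 + g_K·P_K/σ²); and E_k := τ_0·P_{r,k} + ζ·τ_1·(P_k + P_{c,k}) + T·γ_c·f_k³ ≤ τ_0·P_{E,k}(P_s) for all k. Then there exists τ_0′ with 0 ≤ τ_0′ ≤ τ_0 such that (P_th, τ_0′, τ_1, (P_k),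 (f_k)) is also feasible, the computed bits R_k are unchanged, and every user's consumed energy E_k′ := τ_0′·P_{r,k} + ζ·τ_1·(P_k + P_{c,k}) + T·γ_c·f_k³ satisfies E_k′ ≤ E_k. Consequently the maximum of the max-min computation efficiency min_k R_k/E_k over the feasible set of P7 is achieved with P_s = P_th. -/
/-!
The harvested power of the non-linear (logistic) EH model is nondecreasing in the station
power, so raising `P_s` to `P_th` keeps every energy constraint satisfied with the same
`τ_0`. Rates and energies do not involve `P_s`, so the feasible set and its slice
`P_s = P_th` yield the same set of efficiency values.
-/

open Real

noncomputable def logisticHarvestedPower (Pmax μ P0 ψ h Ps : ℝ) : ℝ :=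
  max 0 ((Pmax / exp (-μ * P0 + ψ)) *
    ((1 + exp (-μ * P0 + ψ)) / (1 + exp (-μ * h * Ps + ψ)) - 1))

theorem logisticHarvestedPower_monotone {Pmax μ P0 ψ h : ℝ}
    (hPmax : 0 ≤ Pmax) (hμ : 0 ≤ μ) (hh : 0 ≤ h) :
    Monotone (logisticHarvestedPower Pmax μ P0 ψ h) := by
  intro x y hxy
  have hexp : exp (-μ * h * y + ψ) ≤ exp (-μ * h * x + ψ) := by
    have : μ * h * x ≤ μ * h * y := mul_le_mul_of_nonneg_left hxy (mul_nonneg hμ hh)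
    exact exp_le_exp.mpr (by linarith)
  unfold logisticHarvestedPower
  gcongr

open Finset in
theorem lemma4_station_power_at_max_noma_general
    (K : ℕ) (T : ℝ)
    (h Rmin Pmax : Fin K → ℝ)
    (hh : ∀ k, 0 < h k)
    (hPmax : ∀ k, 0 < Pmax k)
    (μ ψ P0 Pth : ℝ) (hμ : 0 < μ)
    -- non-linear EH model: harvested power of user k at station power Ps
    (PE : Fin K → ℝ → ℝ)
    (hPE : ∀ k Ps, PE k Ps = max 0 ((Pmax k / Real.exp (-μ * P0 + ψ)) *
      ((1 + Real.exp (-μ * P0 + ψ)) / (1 + Real.exp (-μ * h k * Ps + ψ)) - 1)))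
    -- computed bits (with SIC: user k sees interference from users i > k, so
    -- the strongest user k = K experiences no interference), consumed energy,
    -- feasibility for P7
    (Rate : ℝ → (Fin K → ℝ) → (Fin K → ℝ) → Fin K → ℝ)
    (Energy : ℝ → ℝ → (Fin K → ℝ) → (Fin K → ℝ) → Fin K → ℝ)
    (Feas : ℝ → ℝ → ℝ → (Fin K → ℝ) → (Fin K → ℝ) → Prop)
    (hFeas : ∀ Ps τ0 τ1 P f, Feas Ps τ0 τ1 P f ↔
      (0 ≤ Ps ∧ Ps ≤ Pth) ∧ (0 ≤ τ0 ∧ τ0 ≤ T) ∧ (0 ≤ τ1 ∧ τ1 ≤ T) ∧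
      τ0 + τ1 ≤ T ∧ (∀ k, 0 ≤ P k) ∧ (∀ k, 0 ≤ f k) ∧
      (∀ k, Rmin k ≤ Rate τ1 P f k) ∧
      (∀ k, Energy τ0 τ1 P f k ≤ τ0 * PE k Ps)) :
    -- energy reduction while keeping feasibility and the computed bits
    (∀ Ps τ0 τ1 P f, Feas Ps τ0 τ1 P f →
      ∃ τ0' : ℝ, 0 ≤ τ0' ∧ τ0' ≤ τ0 ∧ Feas Pth τ0' τ1 P f ∧
        ∀ k, Energy τ0' τ1 P f k ≤ Energy τ0 τ1 P f k) ∧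
    -- consequently, the max-min computation efficiency is achieved with Ps = Pth
    sSup {r : ℝ | ∃ Ps τ0 τ1 P f, Feas Ps τ0 τ1 P f ∧
        r = ⨅ k : Fin K, Rate τ1 P f k / Energy τ0 τ1 P f k} =
    sSup {r : ℝ | ∃ τ0 τ1 P f, Feas Pth τ0 τ1 P f ∧
        r = ⨅ k : Fin K, Rate τ1 P f k / Energy τ0 τ1 P f k} := by
  have hPE_mono (k : Fin K) : Monotone (PE k) := by
    rw [show PE k = logisticHarvestedPower (Pmax k) μ P0 ψ (h k) from funext (hPE k)]
    exact logisticHarvestedPower_monotone (hPmax k).le hμ.le (hh k).le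
  have feas_at_max : ∀ Ps τ0 τ1 P f, Feas Ps τ0 τ1 P f → Feas Pth τ0 τ1 P f := by
    intro Ps τ0 τ1 P f hfeas
    rw [hFeas] at hfeas ⊢
    obtain ⟨⟨hPs, hPs_le⟩, hτ0, hτ1, hτ, hP, hf, hR, hE⟩ := hfeas
    refine ⟨⟨hPs.trans hPs_le, le_rfl⟩, hτ0, hτ1, hτ, hP, hf, hR, fun k => ?_⟩
    exact (hE k).trans (mul_le_mul_of_nonneg_left (hPE_mono k hPs_le) hτ0.1)
  refine ⟨fun Ps τ0 τ1 P f hfeas => ?_, ?_⟩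
  · exact ⟨τ0, ((hFeas _ _ _ _ _).mp hfeas).2.1.1, le_rfl, feas_at_max _ _ _ _ _ hfeas,
      fun _ => le_rfl⟩
  · congr 1
    ext r
    constructor
    · rintro ⟨Ps, τ0, τ1, P, f, hfeas, rfl⟩
      exact ⟨τ0, τ1, P, f, feas_at_max _ _ _ _ _ hfeas, rfl⟩
    · rintro ⟨τ0, τ1, P, f, hfeas, rfl⟩
      exact ⟨Pth, τ0, τ1, P, f, hfeas, rfl⟩

open Finset in
/-- Lemma 4: in the NOMA wireless-powered MEC network under partial offloading
(common offloading duration `τ₁`, channel gains ordered `g₁ < ⋯ < g_K`, SIC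
decoding in descending channel order so that user `k` sees interference
`Σ_{i>k} g_i·P_i`), any feasible point of P7 can be modified, by setting the
station power to `P_th` and suitably shrinking the energy-harvesting time, into
another feasible point with unchanged computed bits and no larger consumed
energy for every user; consequently the max-min computation efficiency over
the feasible set of P7 is achieved with `P_s = P_th`. -/
theorem lemma4_station_power_at_max_noma
    (K : ℕ) (hK : 0 < K) (T C B σ2 ζ γc : ℝ)
    (hT : 0 < T) (hC : 0 < C) (hB : 0 < B) (hσ : 0 < σ2) (hζ : 0 < ζ) (hγ : 0 < γc)
    (h g v Pr Pc Rmin Pmax : Fin K → ℝ)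
    (hh : ∀ k, 0 < h k) (hg : ∀ k, 0 < g k) (hord : StrictMono g)
    (hv : ∀ k, 0 < v k)
    (hPr : ∀ k, 0 ≤ Pr k) (hPc : ∀ k, 0 ≤ Pc k) (hRmin : ∀ k, 0 < Rmin k)
    (hPmax : ∀ k, 0 < Pmax k)
    (μ ψ P0 Pth : ℝ) (hμ : 0 < μ) (hP0 : 0 ≤ P0) (hPth : 0 < Pth)
    (hthr : ∀ k, P0 < h k * Pth)
    -- non-linear EH model: harvested power of user k at station power Ps
    (PE : Fin K → ℝ → ℝ)
    (hPE : ∀ k Ps, PE k Ps = max 0 ((Pmax k / Real.exp (-μ * P0 + ψ)) *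
      ((1 + Real.exp (-μ * P0 + ψ)) / (1 + Real.exp (-μ * h k * Ps + ψ)) - 1)))
    -- computed bits (with SIC: user k sees interference from users i > k, so
    -- the strongest user k = K experiences no interference), consumed energy,
    -- feasibility for P7
    (Rate : ℝ → (Fin K → ℝ) → (Fin K → ℝ) → Fin K → ℝ)
    (hRate : ∀ τ1 P f k, Rate τ1 P f k =
      T * f k / C + (B * τ1 / v k) * Real.logb 2
        (1 + g k * P k / ((∑ i ∈ Finset.univ.filter (fun i => k < i), g i * P i) + σ2)))
    (Energy : ℝ → ℝ → (Fin K → ℝ) → (Fin K → ℝ) → Fin K → ℝ)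
    (hEnergy : ∀ τ0 τ1 P f k, Energy τ0 τ1 P f k =
      τ0 * Pr k + ζ * τ1 * (P k + Pc k) + T * γc * (f k) ^ 3)
    (Feas : ℝ → ℝ → ℝ → (Fin K → ℝ) → (Fin K → ℝ) → Prop)
    (hFeas : ∀ Ps τ0 τ1 P f, Feas Ps τ0 τ1 P f ↔
      (0 ≤ Ps ∧ Ps ≤ Pth) ∧ (0 ≤ τ0 ∧ τ0 ≤ T) ∧ (0 ≤ τ1 ∧ τ1 ≤ T) ∧
      τ0 + τ1 ≤ T ∧ (∀ k, 0 ≤ P k) ∧ (∀ k, 0 ≤ f k) ∧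
      (∀ k, Rmin k ≤ Rate τ1 P f k) ∧
      (∀ k, Energy τ0 τ1 P f k ≤ τ0 * PE k Ps)) :
    -- energy reduction while keeping feasibility and the computed bits
    (∀ Ps τ0 τ1 P f, Feas Ps τ0 τ1 P f →
      ∃ τ0' : ℝ, 0 ≤ τ0' ∧ τ0' ≤ τ0 ∧ Feas Pth τ0' τ1 P f ∧
        ∀ k, Energy τ0' τ1 P f k ≤ Energy τ0 τ1 P f k) ∧
    -- consequently, the max-min computation efficiency is achieved with Ps = Pth
    sSup {r : ℝ | ∃ Ps τ0 τ1 P f, Feas Ps τ0 τ1 P f ∧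
        r = ⨅ k : Fin K, Rate τ1 P f k / Energy τ0 τ1 P f k} =
    sSup {r : ℝ | ∃ τ0 τ1 P f, Feas Pth τ0 τ1 P f ∧
        r = ⨅ k : Fin K, Rate τ1 P f k / Energy τ0 τ1 P f k} :=
  lemma4_station_power_at_max_noma_general K T h Rmin Pmax hh hPmax μ ψ P0 Pth hμ PE hPE Rate Energy
    Feas hFeas
end
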